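/- arXiv:2506.07066 — 2 statements merged into one kernel-verified Lean document; each statement's English description precedes it below -/
import Mathlib

section
/- Let ⪰ satisfy the vNM axioms on the lotteries over a nonempty finite set X. If p and q are lotteries with p ≻ q, and α, β are real numbers with 0 ≤ α < β ≤ 1, then mix(p, q, β) ≻ mix(p, q, α). -/
/-- A lottery over a finite set `X`: a probability assignment that is
nonnegative and sums to one. -/
def Lottery (X : Type) [Fintype X] : Type :=
  { p : X → ℝ // (∀ x, 0 ≤ p x) ∧ ∑ x, p x = 1 }

/-- Convex combination (mixture) of two lotteries with weight `α`. -/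
noncomputable def Lottery.mix {X : Type} [Fintype X] (p q : Lottery X) (α : ℝ)
    (hα0 : 0 ≤ α) (hα1 : α ≤ 1) : Lottery X :=
  ⟨fun x => α * p.val x + (1 - α) * q.val x, by
    refine ⟨fun x => ?_, ?_⟩
    · have hp := p.property.1 x
      have hq := q.property.1 x
      dsimp only
      nlinarith
    · dsimp only
      rw [Finset.sum_add_distrib, ← Finset.mul_sum, ← Finset.mul_sum,
        p.property.2, q.property.2]
      ring⟩

/-- Expected utility of lottery `p` with respect to utility function `u`. -/
noncomputable def expectedUtility {X : Type} [Fintype X] (p : Lottery X) (u : X → ℝ) : ℝ :=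
  ∑ x, p.val x * u x

/-- Strict preference: `p ≻ q` iff `p ⪰ q` and not `q ⪰ p`. -/
def strictPref {X : Type} [Fintype X] (pref : Lottery X → Lottery X → Prop)
    (p q : Lottery X) : Prop := pref p q ∧ ¬ pref q p

/-- Indifference: `p ∼ q` iff `p ⪰ q` and `q ⪰ p`. -/
def indiff {X : Type} [Fintype X] (pref : Lottery X → Lottery X → Prop)
    (p q : Lottery X) : Prop := pref p q ∧ pref q p

/-- Completeness axiom (A1a). -/
def PrefComplete {X : Type} [Fintype X] (pref : Lottery X → Lottery X → Prop) : Prop :=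
  ∀ p q : Lottery X, pref p q ∨ pref q p

/-- Transitivity axiom (A1b). -/
def PrefTransitive {X : Type} [Fintype X] (pref : Lottery X → Lottery X → Prop) : Prop :=
  ∀ p q r : Lottery X, pref p q → pref q r → pref p r

/-- Continuity axiom (A2). -/
def PrefContinuity {X : Type} [Fintype X] (pref : Lottery X → Lottery X → Prop) : Prop :=
  ∀ p q r : Lottery X, pref p q → pref q r → ¬ pref r p →
    ∃ (α β : ℝ) (h : 0 < α ∧ α < 1 ∧ 0 < β ∧ β < 1),
      strictPref pref (Lottery.mix p r α (le_of_lt h.1) (le_of_lt h.2.1)) q ∧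
      strictPref pref q (Lottery.mix p r β (le_of_lt h.2.2.1) (le_of_lt h.2.2.2))

/-- Independence axiom (A3), strict-preference part. -/
def PrefIndependence {X : Type} [Fintype X] (pref : Lottery X → Lottery X → Prop) : Prop :=
  ∀ (p q r : Lottery X) (α : ℝ) (h : 0 < α ∧ α ≤ 1),
    strictPref pref p q →
    strictPref pref (Lottery.mix p r α (le_of_lt h.1) h.2) (Lottery.mix q r α (le_of_lt h.1) h.2)

/-- Independence axiom (A3), indifference part. -/
def PrefIndepIndiff {X : Type} [Fintype X] (pref : Lottery X → Lottery X → Prop) : Prop :=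
  ∀ (p q r : Lottery X) (α : ℝ) (h : 0 < α ∧ α ≤ 1),
    indiff pref p q →
    indiff pref (Lottery.mix p r α (le_of_lt h.1) h.2) (Lottery.mix q r α (le_of_lt h.1) h.2)

/-!
Mixing a strict preference `p ≻ q` with `p` itself (independence) gives `p ≻ r` for
`r = mix(p, q, α)`. Mixing `p ≻ r` with `r` at weight `γ = (β - α) / (1 - α)` then gives
`mix(p, r, γ) ≻ r`, and `mix(p, r, γ) = mix(p, q, β)`.
-/

namespace Lottery

variable {X : Type} [Fintype X]

theorem ext {p q : Lottery X} (h : ∀ x, p.val x = q.val x) : p = q :=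
  Subtype.ext (funext h)

theorem mix_self (p : Lottery X) {α : ℝ} (hα0 : 0 ≤ α) (hα1 : α ≤ 1) :
    mix p p α hα0 hα1 = p :=
  ext fun x => by simp only [mix]; ring

theorem mix_one_sub (p q : Lottery X) {α : ℝ} (hα0 : 0 ≤ α) (hα1 : α ≤ 1)
    (h0 : 0 ≤ 1 - α) (h1 : 1 - α ≤ 1) :
    mix q p (1 - α) h0 h1 = mix p q α hα0 hα1 :=
  ext fun x => by simp only [mix]; ring

theorem mix_mix_self_left (p q : Lottery X) {α β γ : ℝ} (hα0 : 0 ≤ α) (hα1 : α ≤ 1)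
    (hγ0 : 0 ≤ γ) (hγ1 : γ ≤ 1) (hβ0 : 0 ≤ β) (hβ1 : β ≤ 1) (hβ : β = γ + (1 - γ) * α) :
    mix p (mix p q α hα0 hα1) γ hγ0 hγ1 = mix p q β hβ0 hβ1 :=
  ext fun x => by simp only [mix, hβ]; ring

end Lottery

section Independence

variable {X : Type} [Fintype X] {pref : Lottery X → Lottery X → Prop}

theorem strictPref_mix_left_of_strictPref (h_indep : PrefIndependence pref)
    {p q : Lottery X} (h : strictPref pref p q) {γ : ℝ} (hγ0 : 0 < γ) (hγ1 : γ ≤ 1) :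
    strictPref pref p (Lottery.mix q p γ hγ0.le hγ1) := by
  simpa only [Lottery.mix_self] using h_indep p q p γ ⟨hγ0, hγ1⟩ h

theorem strictPref_mix_right_of_strictPref (h_indep : PrefIndependence pref)
    {p q : Lottery X} (h : strictPref pref p q) {γ : ℝ} (hγ0 : 0 < γ) (hγ1 : γ ≤ 1) :
    strictPref pref (Lottery.mix p q γ hγ0.le hγ1) q := by
  simpa only [Lottery.mix_self] using h_indep p q q γ ⟨hγ0, hγ1⟩ h

end Independence

theorem mixture_monotone_general {X : Type} [Fintype X]
    (pref : Lottery X → Lottery X → Prop)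
    (h_indep : PrefIndependence pref)
    (p q : Lottery X) (h : strictPref pref p q)
    (α β : ℝ) (hα0 : 0 ≤ α) (hαβ : α < β) (hβ1 : β ≤ 1) :
    strictPref pref
      (Lottery.mix p q β (le_trans hα0 (le_of_lt hαβ)) hβ1)
      (Lottery.mix p q α hα0 (le_trans (le_of_lt hαβ) hβ1)) := by
  have hα1 : α ≤ 1 := hαβ.le.trans hβ1
  have h1α : 0 < 1 - α := by linarith
  have hpr : strictPref pref p (Lottery.mix p q α hα0 hα1) := by
    rw [← Lottery.mix_one_sub p q hα0 hα1 h1α.le (by linarith)]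
    exact strictPref_mix_left_of_strictPref h_indep h h1α (by linarith)
  have hγ0 : 0 < (β - α) / (1 - α) := div_pos (by linarith) h1α
  have hγ1 : (β - α) / (1 - α) ≤ 1 := by rw [div_le_one h1α]; linarith
  have hβ : β = (β - α) / (1 - α) + (1 - (β - α) / (1 - α)) * α := by
    field_simp
    ring
  rw [← Lottery.mix_mix_self_left p q hα0 hα1 hγ0.le hγ1 _ hβ1 hβ]
  exact strictPref_mix_right_of_strictPref h_indep hpr hγ0 hγ1

theorem mixture_monotone {X : Type} [Fintype X] [Nonempty X]
    (pref : Lottery X → Lottery X → Prop)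
    (h_complete : PrefComplete pref) (h_trans : PrefTransitive pref)
    (h_cont : PrefContinuity pref)
    (h_indep : PrefIndependence pref) (h_indep_indiff : PrefIndepIndiff pref)
    (p q : Lottery X) (h : strictPref pref p q)
    (α β : ℝ) (hα0 : 0 ≤ α) (hαβ : α < β) (hβ1 : β ≤ 1) :
    strictPref pref
      (Lottery.mix p q β (le_trans hα0 (le_of_lt hαβ)) hβ1)
      (Lottery.mix p q α hα0 (le_trans (le_of_lt hαβ) hβ1)) :=
  mixture_monotone_general pref h_indep p q h α β hα0 hαβ hβ1
end

section
/- (vNM Utility Uniqueness) Let X be a nonempty finite set, let ⪰ be a binary relation on the lotteries over X, and let u, v : X → ℝ be two utility functions such that for all lotteries p, q over X: p ⪰ q iff EU(p, u) ≥ EU(q, u), and p ⪰ q iff EU(p, v) ≥ EU(q, v). Then there exist real constants α > 0 and β such that v(x) = α·u(x) + β for all x ∈ X. -/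
/-!
Both `u` and `v` represent the same weak order on lotteries, so `u` and `v` rank pure lotteries
identically, and any lottery indifferent under `u` is indifferent under `v`. Take a `u`-best outcome
`a` and a `u`-worst outcome `b`. If `u a = u b`, both utilities are constant. Otherwise every
outcome `x` is `u`-indifferent to the mixture of `a` and `b` with weight
`t = (u x - u b) / (u a - u b)`, hence also `v`-indifferent, i.e. `v x = v b + t (v a - v b)`.
-/

section
variable {X : Type} [Fintype X]

noncomputable def Lottery.pure [DecidableEq X] (x : X) : Lottery X :=
  ⟨fun y => if y = x then 1 else 0, fun _ => ite_nonneg zero_le_one le_rfl, by simp⟩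

lemma expectedUtility_pure [DecidableEq X] (x : X) (w : X → ℝ) :
    expectedUtility (Lottery.pure x) w = w x := by
  simp [expectedUtility, Lottery.pure]

lemma expectedUtility_mix (p q : Lottery X) {t : ℝ} (h0 : 0 ≤ t) (h1 : t ≤ 1)
    (w : X → ℝ) :
    expectedUtility (p.mix q t h0 h1) w
      = t * expectedUtility p w + (1 - t) * expectedUtility q w := by
  simp only [expectedUtility, Lottery.mix, Finset.mul_sum, ← Finset.sum_add_distrib]
  exact Finset.sum_congr rfl fun x _ => by ring

variable [DecidableEq X] {u v : X → ℝ}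
  (h : ∀ p q : Lottery X,
    expectedUtility p u ≤ expectedUtility q u ↔ expectedUtility p v ≤ expectedUtility q v)
include h

lemma le_iff_le_of_expectedUtility_le_iff (x y : X) : u x ≤ u y ↔ v x ≤ v y := by
  simpa only [expectedUtility_pure] using h (.pure x) (.pure y)

lemma eq_of_expectedUtility_le_iff {a b : X} (hab : u a = u b) : v a = v b :=
  le_antisymm ((le_iff_le_of_expectedUtility_le_iff h a b).1 hab.le)
    ((le_iff_le_of_expectedUtility_le_iff h b a).1 hab.ge)

lemma eq_add_mul_of_expectedUtility_le_iff {a b : X} (hab : u b < u a)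
    (hmax : ∀ x, u x ≤ u a) (hmin : ∀ x, u b ≤ u x) (x : X) :
    v x = v b + (u x - u b) / (u a - u b) * (v a - v b) := by
  set t := (u x - u b) / (u a - u b)
  have hpos : 0 < u a - u b := sub_pos.2 hab
  have ht0 : 0 ≤ t := div_nonneg (sub_nonneg.2 (hmin x)) hpos.le
  have ht1 : t ≤ 1 := (div_le_one hpos).2 (by linarith [hmax x])
  have mix_eu (w : X → ℝ) :
      expectedUtility ((Lottery.pure a).mix (.pure b) t ht0 ht1) w = t * w a + (1 - t) * w b := by
    rw [expectedUtility_mix, expectedUtility_pure, expectedUtility_pure]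
  have hu : expectedUtility ((Lottery.pure a).mix (.pure b) t ht0 ht1) u
      = expectedUtility (.pure x) u := by
    rw [mix_eu, expectedUtility_pure]
    linear_combination div_mul_cancel₀ (u x - u b) hpos.ne'
  have hv := le_antisymm ((h _ _).1 hu.le) ((h _ _).1 hu.ge)
  rw [mix_eu, expectedUtility_pure] at hv
  linear_combination -hv

end

theorem vnm_utility_uniqueness {X : Type} [Fintype X] [Nonempty X]
    (pref : Lottery X → Lottery X → Prop) (u v : X → ℝ)
    (h_u : ∀ p q : Lottery X, pref p q ↔ expectedUtility p u ≥ expectedUtility q u)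
    (h_v : ∀ p q : Lottery X, pref p q ↔ expectedUtility p v ≥ expectedUtility q v) :
    ∃ α β : ℝ, 0 < α ∧ ∀ x : X, v x = α * u x + β := by
  classical
  have h : ∀ p q : Lottery X,
      expectedUtility p u ≤ expectedUtility q u ↔ expectedUtility p v ≤ expectedUtility q v :=
    fun p q => (h_u q p).symm.trans (h_v q p)
  obtain ⟨a, hmax⟩ := Finite.exists_max u
  obtain ⟨b, hmin⟩ := Finite.exists_min u
  rcases (hmin a).eq_or_lt with hconst | hab
  · have hu (x : X) : u x = u b := le_antisymm (hconst ▸ hmax x) (hmin x)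
    refine ⟨1, v b - u b, one_pos, fun x => ?_⟩
    rw [eq_of_expectedUtility_le_iff h (hu x), hu x]
    ring
  · have hvab : v b < v a :=
      (lt_iff_lt_of_le_iff_le (le_iff_le_of_expectedUtility_le_iff h a b)).1 hab
    refine ⟨(v a - v b) / (u a - u b), v b - (v a - v b) / (u a - u b) * u b,
      div_pos (sub_pos.2 hvab) (sub_pos.2 hab), fun x => ?_⟩
    rw [eq_add_mul_of_expectedUtility_le_iff h hab hmax hmin x]
    ring
end
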